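/- arXiv:math/0305045 — 4 statements merged into one kernel-verified Lean document; each statement's English description precedes it below -/
import Mathlib

section
/- Let φ be the Laplace transform of a nonnegative random variable (i.e., φ is completely monotone on (0,∞) with φ(0+)=1). Then for every θ > 0 and integers j ≥ 0, k ≥ 1, the function P(s) = s^j · φ((1 - s^k)/θ) defined for s ∈ [0,1] is absolutely monotone on [0,1) with P(1) = 1, hence is a probability generating function of a nonnegative-integer-valued random variable. -/
open MeasureTheory Filter Topology

/-- `φ` is the Laplace transform of a nonnegative random variable. -/
def IsLaplaceOfNonneg (φ : ℝ → ℝ) : Prop :=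
  ∃ μ : Measure ℝ, IsProbabilityMeasure μ ∧ (∀ᵐ x ∂μ, 0 ≤ x) ∧
    ∀ v : ℝ, 0 ≤ v → φ v = ∫ x, Real.exp (-v * x) ∂μ

/-!
Let `X ≥ 0` have Laplace transform `φ`, and let `M` be mixed Poisson with random rate `X / θ`.
Averaging the Poisson generating function `e^{-(1-t)x/θ}` over `X` shows that `M` has generating
function `t ↦ φ ((1 - t) / θ)`, so `s ↦ s ^ j * φ ((1 - s ^ k) / θ)` is the generating function of
`j + k M`. A power series with nonnegative coefficients converging on `(-1, 1)` has power series
`∑ (n + 1) a_{n+1} s ^ n` with nonnegative coefficients as its derivative; iterating, all its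
derivatives are nonnegative on `[0, 1)`.
-/

open FormalMultilinearSeries

section PowerSeries

variable {𝕜 : Type*} [NontriviallyNormedField 𝕜]

def derivCoeffs (a : ℕ → 𝕜) (n : ℕ) : 𝕜 := (n + 1) * a (n + 1)

theorem FormalMultilinearSeries.eq_ofScalars_iff {p : FormalMultilinearSeries 𝕜 𝕜 𝕜}
    {a : ℕ → 𝕜} : p = ofScalars 𝕜 a ↔ ∀ n, p.coeff n = a n := by
  constructor
  · rintro rfl n
    simp
  · intro h
    ext n : 1
    rw [← mkPiRing_coeff_eq p n, ← mkPiRing_coeff_eq (ofScalars 𝕜 a) n, h, coeff_ofScalars]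

variable [CompleteSpace 𝕜] {f : 𝕜 → 𝕜} {a : ℕ → 𝕜} {r : ENNReal}

theorem HasFPowerSeriesOnBall.deriv_ofScalars
    (hf : HasFPowerSeriesOnBall f (ofScalars 𝕜 a) 0 r) :
    HasFPowerSeriesOnBall (deriv f) (ofScalars 𝕜 (derivCoeffs a)) 0 r := by
  have h := (ContinuousLinearMap.apply 𝕜 𝕜 (1 : 𝕜)).comp_hasFPowerSeriesOnBall hf.fderiv
  convert h using 1
  · rfl
  · rw [eq_comm, eq_ofScalars_iff]
    intro n
    exact (derivSeries_coeff_one (ofScalars 𝕜 a) n).trans (by simp [nsmul_eq_mul, derivCoeffs])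

theorem HasFPowerSeriesOnBall.iteratedDeriv_ofScalars
    (hf : HasFPowerSeriesOnBall f (ofScalars 𝕜 a) 0 r) (n : ℕ) :
    HasFPowerSeriesOnBall (iteratedDeriv n f) (ofScalars 𝕜 (derivCoeffs^[n] a)) 0 r := by
  induction n with
  | zero => simpa
  | succ n ih =>
    rw [iteratedDeriv_succ, Function.iterate_succ_apply']
    exact ih.deriv_ofScalars

theorem hasFPowerSeriesOnBall_ofScalarsSum_of_bounded {C : ℝ} (ha : ∀ n, ‖a n‖ ≤ C) :
    HasFPowerSeriesOnBall (ofScalarsSum a) (ofScalars 𝕜 a) 0 1 := by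
  have h1 : (1 : ENNReal) ≤ (ofScalars 𝕜 a).radius := by
    simpa using (ofScalars 𝕜 a).le_radius_of_bound C (r := 1) fun n => by simpa using ha n
  exact ((ofScalars 𝕜 a).hasFPowerSeriesOnBall (one_pos.trans_le h1)).mono one_pos h1

end PowerSeries

theorem Real.mem_eball_zero_one_iff {s : ℝ} : s ∈ Metric.eball 0 1 ↔ |s| < 1 := by
  rw [mem_eball_zero_iff, ← ofReal_norm, ENNReal.ofReal_lt_one, Real.norm_eq_abs]

theorem derivCoeffs_iterate_nonneg {a : ℕ → ℝ} (ha : ∀ n, 0 ≤ a n) (n m : ℕ) :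
    0 ≤ (derivCoeffs^[n] a) m := by
  induction n generalizing m with
  | zero => exact ha m
  | succ n ih =>
    rw [Function.iterate_succ_apply']
    exact mul_nonneg (by positivity) (ih _)

theorem HasFPowerSeriesOnBall.iteratedDeriv_nonneg {f : ℝ → ℝ} {a : ℕ → ℝ} {r : ENNReal}
    (hf : HasFPowerSeriesOnBall f (ofScalars ℝ a) 0 r) (ha : ∀ n, 0 ≤ a n) (n : ℕ) {s : ℝ}
    (hs : s ∈ Metric.eball 0 r) (hs₀ : 0 ≤ s) : 0 ≤ iteratedDeriv n f s := by
  have h := (hf.iteratedDeriv_ofScalars n).hasSum hs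
  rw [zero_add] at h
  refine h.nonneg fun m => ?_
  rw [ofScalars_apply_eq]
  exact smul_nonneg (derivCoeffs_iterate_nonneg ha n m) (pow_nonneg hs₀ m)

theorem PMF.exists_toReal_eq {α : Type*} {c : α → ℝ} (hc : ∀ a, 0 ≤ c a) (h : HasSum c 1) :
    ∃ p : PMF α, ∀ a, (p a).toReal = c a := by
  refine ⟨⟨fun a => ENNReal.ofReal (c a), ?_⟩, fun a => ENNReal.toReal_ofReal (hc a)⟩
  simpa [ENNReal.ofReal] using ENNReal.hasSum_coe.mpr (h.toNNReal hc)

theorem PMF.tsum_map_toReal_mul {α β : Type*} [MeasurableSpace α] [DiscreteMeasurableSpace α]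
    [MeasurableSpace β] [DiscreteMeasurableSpace β] (p : PMF α) (f : α → β) {g : β → ℝ} {C : ℝ}
    (hg : ∀ b, ‖g b‖ ≤ C) :
    ∑' b, ((p.map f) b).toReal * g b = ∑' a, (p a).toReal * g (f a) := by
  have hg_int : Integrable g (p.map f).toMeasure :=
    .of_bound Measurable.of_discrete.aestronglyMeasurable C (.of_forall hg)
  have hgf_int : Integrable (fun a => g (f a)) p.toMeasure :=
    .of_bound Measurable.of_discrete.aestronglyMeasurable C (.of_forall fun a => hg (f a))
  simp_rw [← smul_eq_mul]
  rw [← PMF.integral_eq_tsum _ _ hg_int, ← p.toMeasure_map (f := f) .of_discrete,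
    integral_map Measurable.of_discrete.aemeasurable Measurable.of_discrete.aestronglyMeasurable,
    PMF.integral_eq_tsum _ _ hgf_int]

theorem hasSum_poisson_mul_pow (x t : ℝ) :
    HasSum (fun m : ℕ => Real.exp (-x) * x ^ m / m.factorial * t ^ m)
      (Real.exp (-(1 - t) * x)) := by
  have h := (NormedSpace.expSeries_div_hasSum_exp (t * x)).mul_left (Real.exp (-x))
  rw [← Real.exp_eq_exp_ℝ, ← Real.exp_add] at h
  rw [show -(1 - t) * x = -x + t * x by ring]
  exact h.congr_fun fun m => by ring

theorem hasSum_integral_poisson_mul_pow {μ : Measure ℝ} [IsFiniteMeasure μ]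
    (hμ : ∀ᵐ x ∂μ, 0 ≤ x) {t : ℝ} (ht : |t| ≤ 1) :
    HasSum (fun m : ℕ => (∫ x, Real.exp (-x) * x ^ m / m.factorial ∂μ) * t ^ m)
      (∫ x, Real.exp (-(1 - t) * x) ∂μ) := by
  have hpoisson : ∀ x : ℝ, HasSum (fun m : ℕ => Real.exp (-x) * x ^ m / m.factorial) 1 :=
    fun x => by simpa using hasSum_poisson_mul_pow x 1
  simp_rw [← integral_mul_const]
  refine hasSum_integral_of_dominated_convergence
    (fun m x => Real.exp (-x) * x ^ m / m.factorial) (fun m => by fun_prop) (fun m => ?_)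
    (.of_forall fun x => (hpoisson x).summable) ?_
    (.of_forall fun x => hasSum_poisson_mul_pow x t)
  · filter_upwards [hμ] with x hx
    rw [norm_mul, norm_pow, Real.norm_of_nonneg (by positivity)]
    exact mul_le_of_le_one_right (by positivity) (pow_le_one₀ (norm_nonneg t) ht)
  · simp_rw [fun x => (hpoisson x).tsum_eq]
    exact integrable_const 1

namespace IsLaplaceOfNonneg

variable {φ : ℝ → ℝ}

theorem apply_zero (hφ : IsLaplaceOfNonneg φ) : φ 0 = 1 := by
  obtain ⟨μ, _, -, hφ⟩ := hφ
  simp [hφ 0 le_rfl]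

theorem comp_div (hφ : IsLaplaceOfNonneg φ) {θ : ℝ} (hθ : 0 ≤ θ) :
    IsLaplaceOfNonneg fun v => φ (v / θ) := by
  obtain ⟨μ, _, hμ, hφ⟩ := hφ
  have hdiv : Measurable fun x : ℝ => x / θ := by fun_prop
  refine ⟨μ.map (· / θ), Measure.isProbabilityMeasure_map hdiv.aemeasurable, ?_, fun v hv => ?_⟩
  · exact (ae_map_iff hdiv.aemeasurable measurableSet_Ici).mpr
      (hμ.mono fun x hx => div_nonneg hx hθ)
  · show φ (v / θ) = _
    rw [hφ _ (div_nonneg hv hθ), integral_map hdiv.aemeasurable (by fun_prop)]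
    congr 1 with x
    congr 1
    ring

theorem exists_pmf_tsum_eq (hφ : IsLaplaceOfNonneg φ) :
    ∃ N : PMF ℕ, ∀ t : ℝ, |t| ≤ 1 → ∑' m, (N m).toReal * t ^ m = φ (1 - t) := by
  have hφ0 := hφ.apply_zero
  obtain ⟨μ, _, hμ, hφμ⟩ := hφ
  have hsum : ∀ t : ℝ, |t| ≤ 1 → HasSum _ (φ (1 - t)) := fun t ht => by
    rw [hφμ _ (by linarith [le_of_abs_le ht])]
    exact hasSum_integral_poisson_mul_pow hμ ht
  obtain ⟨N, hN⟩ := PMF.exists_toReal_eq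
    (c := fun m : ℕ => ∫ x, Real.exp (-x) * x ^ m / m.factorial ∂μ)
    (fun m => integral_nonneg_of_ae <| hμ.mono fun x hx => by positivity)
    (by simpa only [one_pow, mul_one, sub_self, hφ0] using hsum 1 (by simp))
  exact ⟨N, fun t ht => by simpa only [hN] using (hsum t ht).tsum_eq⟩

theorem exists_pmf_tsum_eq_pow_mul (hφ : IsLaplaceOfNonneg φ) {θ : ℝ} (hθ : 0 ≤ θ) (j k : ℕ) :
    ∃ N : PMF ℕ, ∀ s : ℝ, |s| ≤ 1 →
      ∑' n, (N n).toReal * s ^ n = s ^ j * φ ((1 - s ^ k) / θ) := by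
  obtain ⟨M, hM⟩ := (hφ.comp_div hθ).exists_pmf_tsum_eq
  refine ⟨M.map fun m => j + k * m, fun s hs => ?_⟩
  have hpow : ∀ n : ℕ, |s ^ n| ≤ 1 := fun n => by
    rw [abs_pow]
    exact pow_le_one₀ (abs_nonneg s) hs
  rw [M.tsum_map_toReal_mul _ hpow, ← hM (s ^ k) (hpow k), ← tsum_mul_left]
  congr 1 with m
  ring

end IsLaplaceOfNonneg

theorem pgf_class_of_laplace_general (φ : ℝ → ℝ) (hφ : IsLaplaceOfNonneg φ)
    (θ : ℝ) (hθ : 0 < θ) (j k : ℕ) :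
    (∀ n : ℕ, ∀ s ∈ Set.Ico (0 : ℝ) 1,
      0 ≤ iteratedDeriv n (fun s : ℝ => s ^ j * φ ((1 - s ^ k) / θ)) s) ∧
    (1 : ℝ) ^ j * φ ((1 - (1 : ℝ) ^ k) / θ) = 1 ∧
    ∃ N : PMF ℕ, ∀ s ∈ Set.Icc (0 : ℝ) 1,
      ∑' n : ℕ, (N n).toReal * s ^ n = s ^ j * φ ((1 - s ^ k) / θ) := by
  obtain ⟨N, hN⟩ := hφ.exists_pmf_tsum_eq_pow_mul hθ.le j k
  have hP : HasFPowerSeriesOnBall (fun s : ℝ => s ^ j * φ ((1 - s ^ k) / θ))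
      (ofScalars ℝ fun n => (N n).toReal) 0 1 := by
    refine (hasFPowerSeriesOnBall_ofScalarsSum_of_bounded (C := 1) fun n => ?_).congr
      fun s hs => ?_
    · simpa using ENNReal.toReal_mono ENNReal.one_ne_top (N.coe_le_one n)
    · rw [ofScalars_sum_eq]
      exact hN s (Real.mem_eball_zero_one_iff.mp hs).le
  refine ⟨fun n s hs => hP.iteratedDeriv_nonneg (fun _ => ENNReal.toReal_nonneg) n ?_ hs.1,
    by simp [hφ.apply_zero], N, fun s hs => hN s (abs_le.mpr ⟨by linarith [hs.1], hs.2⟩)⟩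
  rw [Real.mem_eball_zero_one_iff, abs_of_nonneg hs.1]
  exact hs.2

/-- for every `θ > 0`, `j ≥ 0`, `k ≥ 1`, the function
`P(s) = s^j · φ((1 - s^k)/θ)` is absolutely monotone on `[0,1)`, satisfies `P(1) = 1`,
and is the probability generating function of a nonnegative-integer-valued random variable. -/
theorem pgf_class_of_laplace (φ : ℝ → ℝ) (hφ : IsLaplaceOfNonneg φ)
    (θ : ℝ) (hθ : 0 < θ) (j k : ℕ) (hk : 1 ≤ k) :
    (∀ n : ℕ, ∀ s ∈ Set.Ico (0 : ℝ) 1,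
      0 ≤ iteratedDeriv n (fun s : ℝ => s ^ j * φ ((1 - s ^ k) / θ)) s) ∧
    (1 : ℝ) ^ j * φ ((1 - (1 : ℝ) ^ k) / θ) = 1 ∧
    ∃ N : PMF ℕ, ∀ s ∈ Set.Icc (0 : ℝ) 1,
      ∑' n : ℕ, (N n).toReal * s ^ n = s ^ j * φ ((1 - s ^ k) / θ) :=
  pgf_class_of_laplace_general φ hφ θ hθ j k
end

section
/- If a characteristic function h belongs to the domain of attraction of a stable law with characteristic function ω(t) = e^{-ψ(t)} via norming constants a_n > 0, b_n (i.e., exp{-n(1 - h_n(t))} → e^{-ψ(t)} where h_n(t) = h(t/a_n)e^{-itb_n}), then for any Laplace transform φ of a positive random variable and any PGF family P_θ(s) = s^j φ((1-s^k)/θ), one has P_{1/n}(h_n(t)) → φ(k ψ(t)) for all t ∈ ℝ; i.e., h belongs to the domain of φ-attraction of the φ-stable law with characteristic function φ(kψ). -/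
/-!
Write `h_n(t) = h(t/a_n) e^{-itb_n}`. Since `n(1 - h_n(t))` converges, `h_n(t) → 1`, and the
factorisation `1 - s^k = (1 - s)(1 + s + ⋯ + s^{k-1})` gives `n(1 - h_n(t)^k) → kψ(t)`.
As `|h_n(t)| ≤ 1`, these arguments lie in the closed right half-plane, where the Laplace transform
`φ(z) = ∫ e^{-zx} dμ(x)` of a law on `[0, ∞)` is continuous by dominated convergence (bound `1`).
The prefactor `h_n(t)^j` tends to `1`.
-/

open MeasureTheory Filter Topology

def IsCharFun (ω : ℝ → ℂ) : Prop :=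
  ∃ μ : Measure ℝ, IsProbabilityMeasure μ ∧
    ∀ t : ℝ, ω t = ∫ x, Complex.exp (t * x * Complex.I) ∂μ

lemma IsCharFun.norm_le_one {ω : ℝ → ℂ} (hω : IsCharFun ω) (t : ℝ) : ‖ω t‖ ≤ 1 := by
  obtain ⟨ν, hν, hω⟩ := hω
  rw [hω]
  simpa using norm_integral_le_of_norm_le_const (μ := ν) (C := 1)
    (ae_of_all _ fun x => by rw [← Complex.ofReal_mul, Complex.norm_exp_ofReal_mul_I])

lemma norm_mul_exp_neg_mul_I (z : ℂ) (r : ℝ) : ‖z * Complex.exp (-r * Complex.I)‖ = ‖z‖ := by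
  rw [norm_mul, ← Complex.ofReal_neg, Complex.norm_exp_ofReal_mul_I, mul_one]

lemma tendsto_one_of_tendsto_natCast_mul_one_sub {u : ℕ → ℂ} {L : ℂ}
    (hu : Tendsto (fun n : ℕ => (n : ℂ) * (1 - u n)) atTop (𝓝 L)) :
    Tendsto u atTop (𝓝 1) := by
  have hsub : Tendsto (fun n : ℕ => 1 - u n) atTop (𝓝 0) := by
    have hinv : Tendsto (fun n : ℕ => (n : ℂ)⁻¹) atTop (𝓝 0) :=
      tendsto_inv_atTop_nhds_zero_nat
    refine (zero_mul L ▸ hinv.mul hu).congr' ?_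
    filter_upwards [eventually_ne_atTop 0] with n hn
    rw [← mul_assoc, inv_mul_cancel₀ (Nat.cast_ne_zero.mpr hn), one_mul]
  simpa using (tendsto_const_nhds (x := (1 : ℂ))).sub hsub

lemma Filter.Tendsto.mul_one_sub_pow {α : Type*} {l : Filter α} {c u : α → ℂ} {L : ℂ}
    (hL : Tendsto (fun x => c x * (1 - u x)) l (𝓝 L)) (hu : Tendsto u l (𝓝 1)) (k : ℕ) :
    Tendsto (fun x => c x * (1 - u x ^ k)) l (𝓝 (k * L)) := by
  have hgeom : Tendsto (fun x => ∑ i ∈ Finset.range k, u x ^ i) l (𝓝 k) := by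
    simpa using tendsto_finsetSum (Finset.range k) fun i _ => hu.pow i
  refine (mul_comm L k ▸ hL.mul hgeom).congr fun x => ?_
  rw [mul_assoc, mul_neg_geom_sum]

lemma re_natCast_mul_one_sub_nonneg (n : ℕ) {w : ℂ} (hw : ‖w‖ ≤ 1) :
    0 ≤ ((n : ℂ) * (1 - w)).re := by
  have : w.re ≤ 1 := (Complex.re_le_norm w).trans hw
  simpa using mul_nonneg (Nat.cast_nonneg (α := ℝ) n) (sub_nonneg.mpr this)

lemma norm_exp_neg_mul_le_one {z : ℂ} (hz : 0 ≤ z.re) {x : ℝ} (hx : 0 ≤ x) :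
    ‖Complex.exp (-z * x)‖ ≤ 1 := by
  rw [Complex.norm_exp, Real.exp_le_one_iff]
  simpa using mul_nonneg hz hx

lemma tendsto_integral_exp_neg_mul {μ : Measure ℝ} [IsFiniteMeasure μ]
    (hμ : ∀ᵐ x ∂μ, 0 ≤ x) {z : ℕ → ℂ} {w : ℂ} (hz : Tendsto z atTop (𝓝 w))
    (hre : ∀ n, 0 ≤ (z n).re) :
    Tendsto (fun n => ∫ x, Complex.exp (-z n * x) ∂μ) atTop
      (𝓝 (∫ x, Complex.exp (-w * x) ∂μ)) := by
  refine tendsto_integral_of_dominated_convergence (fun _ => 1) (fun n => ?_)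
    (integrable_const 1) (fun n => ?_) (ae_of_all _ fun x => ?_)
  · exact (by fun_prop : Continuous fun x : ℝ => Complex.exp (-z n * x)).aestronglyMeasurable
  · filter_upwards [hμ] with x hx using norm_exp_neg_mul_le_one (hre n) hx
  · exact ((by fun_prop : Continuous fun v : ℂ => Complex.exp (-v * x)).tendsto w).comp hz

theorem domain_of_phi_attraction_general (μ : Measure ℝ) (hprob : IsProbabilityMeasure μ)
    (hpos : ∀ᵐ x ∂μ, 0 < x)
    (h : ℝ → ℂ) (hCF : IsCharFun h)
    (a b : ℕ → ℝ)
    (ψ : ℝ → ℂ)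
    (hDA : ∀ t : ℝ,
      Tendsto (fun n : ℕ =>
          (n : ℂ) * (1 - h (t / a n) * Complex.exp (-(t * b n) * Complex.I)))
        atTop (𝓝 (ψ t)))
    (j k : ℕ) :
    ∀ t : ℝ,
      Tendsto (fun n : ℕ =>
          (h (t / a n) * Complex.exp (-(t * b n) * Complex.I)) ^ j *
            ∫ x, Complex.exp
              (-((n : ℂ) * (1 - (h (t / a n) * Complex.exp (-(t * b n) * Complex.I)) ^ k)) * x) ∂μ)
        atTop (𝓝 (∫ x, Complex.exp (-((k : ℂ) * ψ t) * x) ∂μ)) := by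
  intro t
  set u : ℕ → ℂ := fun n => h (t / a n) * Complex.exp (-(t * b n) * Complex.I)
  have hu_norm (n : ℕ) : ‖u n‖ ≤ 1 := by
    simp only [u]
    rw [← Complex.ofReal_mul, norm_mul_exp_neg_mul_I]
    exact hCF.norm_le_one (t / a n)
  have hu : Tendsto u atTop (𝓝 1) := tendsto_one_of_tendsto_natCast_mul_one_sub (hDA t)
  have harg := (hDA t).mul_one_sub_pow hu k
  have hre (n : ℕ) : 0 ≤ ((n : ℂ) * (1 - u n ^ k)).re :=
    re_natCast_mul_one_sub_nonneg n
      ((norm_pow _ k).trans_le (pow_le_one₀ (norm_nonneg _) (hu_norm n)))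
  have hlaplace := tendsto_integral_exp_neg_mul (hpos.mono fun _ hx => hx.le) harg hre
  have hlim := (hu.pow j).mul hlaplace
  rwa [one_pow, one_mul] at hlim

/-- if the characteristic function `h` is in the domain of attraction of the
stable law `ω = e^{-ψ}` via norming constants `a_n > 0`, `b_n`, i.e. with
`h_n(t) = h(t/a_n)·e^{-itb_n}` one has `n(1 - h_n(t)) → ψ(t)` (equivalently
`exp{-n(1 - h_n(t))} → e^{-ψ(t)}`), then for any Laplace transform `φ(z) = ∫ e^{-z·x} dμ(x)`
of a positive random variable and the PGF family `P_θ(s) = s^j φ((1-s^k)/θ)` with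
`θ_n = 1/n`, one has `P_{1/n}(h_n(t)) = h_n(t)^j φ(n(1 - h_n(t)^k)) → φ(kψ(t))`
for all `t`: `h` is in the domain of φ-attraction of the φ-stable law `φ(kψ)`. -/
theorem domain_of_phi_attraction (μ : Measure ℝ) (hprob : IsProbabilityMeasure μ)
    (hpos : ∀ᵐ x ∂μ, 0 < x)
    (h : ℝ → ℂ) (hCF : IsCharFun h)
    (a b : ℕ → ℝ) (ha : ∀ n, 0 < a n)
    (ψ : ℝ → ℂ)
    (hDA : ∀ t : ℝ,
      Tendsto (fun n : ℕ =>
          (n : ℂ) * (1 - h (t / a n) * Complex.exp (-(t * b n) * Complex.I)))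
        atTop (𝓝 (ψ t)))
    (j k : ℕ) (hk : 1 ≤ k) :
    ∀ t : ℝ,
      Tendsto (fun n : ℕ =>
          (h (t / a n) * Complex.exp (-(t * b n) * Complex.I)) ^ j *
            ∫ x, Complex.exp
              (-((n : ℂ) * (1 - (h (t / a n) * Complex.exp (-(t * b n) * Complex.I)) ^ k)) * x) ∂μ)
        atTop (𝓝 (∫ x, Complex.exp (-((k : ℂ) * ψ t) * x) ∂μ)) :=
  domain_of_phi_attraction_general μ hprob hpos h hCF a b ψ hDA j k
end

section
/- Let F_n be a sequence of φ-MID distribution functions on ℝ^d, F_n = φ(-log G_n) with G_n MID, and suppose F_n → F weakly with F a proper distribution function and G_n → G weakly with G a proper distribution function. Then F = φ(-log G) with G MID; i.e., the weak limit of φ-MID laws is φ-MID. -/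
open MeasureTheory Filter Topology

/-- `F` is a (multivariate) distribution function on `ℝ^d`: `F(y) = ν {x | x ≤ y}` for a
probability measure `ν`. -/
def IsDF {d : ℕ} (F : (Fin d → ℝ) → ℝ) : Prop :=
  ∃ ν : Measure (Fin d → ℝ), IsProbabilityMeasure ν ∧
    ∀ y, F y = (ν {x | x ≤ y}).toReal

/-- `G` is max-infinitely divisible: `G^{1/n}` is a distribution function for every `n ≥ 1`. -/
def IsMID {d : ℕ} (G : (Fin d → ℝ) → ℝ) : Prop :=
  IsDF G ∧ ∀ n : ℕ, 0 < n → IsDF (fun y => G y ^ ((n : ℝ)⁻¹))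

/-- `φ` is the Laplace transform of a (strictly) positive random variable. -/
def IsLaplaceOfPos (φ : ℝ → ℝ) : Prop :=
  ∃ μ : Measure ℝ, IsProbabilityMeasure μ ∧ (∀ᵐ x ∂μ, 0 < x) ∧
    ∀ v : ℝ, 0 ≤ v → φ v = ∫ x, Real.exp (-v * x) ∂μ

/-- The distribution function of a probability measure on `ℝ^d`. -/
noncomputable def DFof {d : ℕ} (ν : ProbabilityMeasure (Fin d → ℝ)) :
    (Fin d → ℝ) → ℝ :=
  fun y => ((ν : Measure (Fin d → ℝ)) {x | x ≤ y}).toReal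

/-- `F = φ(-log G)` pointwise, with the convention `φ(∞) = 0` where `G` vanishes. -/
def PhiRel (φ : ℝ → ℝ) {d : ℕ} (F G : (Fin d → ℝ) → ℝ) : Prop :=
  ∀ y, (0 < G y → F y = φ (-Real.log (G y))) ∧ (G y = 0 → F y = 0)

/-!
The function `ψ = phiNegLog φ`, i.e. `t ↦ φ (-log t)` extended by `ψ 0 = 0`, equals
`t ↦ ∫ t ^ x dμ(x)` on `[0, 1]`, hence is continuous there. Distribution functions converge at
every point whose lower orthant has a null boundary for the limit law; such points approach
every point from the upper right, and right-continuity then carries `F = ψ ∘ G` from them to all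
of `ℝ^d`.

For the MID property, fix `k`: the laws `ρₙ` with distribution function `Gₙ^{1/k}` are tight,
since their tails are controlled by those of the convergent (hence tight) sequence `Gₙ`.
By Prokhorov's theorem they have a cluster point, whose distribution function agrees with
`G^{1/k}` at the points of null boundary, hence everywhere.
-/

open Set Function

section Orthant

variable {ι : Type*}

def DiagRightContinuous (f : (ι → ℝ) → ℝ) : Prop :=
  ∀ y, Tendsto (fun δ : ℝ => f (y + const ι δ)) (𝓝[>] 0) (𝓝 (f y))

lemma DiagRightContinuous.comp {f : (ι → ℝ) → ℝ} {g : ℝ → ℝ} {s : Set ℝ}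
    (hf : DiagRightContinuous f) (hg : ContinuousOn g s) (hfs : ∀ y, f y ∈ s) :
    DiagRightContinuous (g ∘ f) := fun y =>
  (hg (f y) (hfs y)).tendsto.comp
    (tendsto_nhdsWithin_iff.2 ⟨hf y, Eventually.of_forall fun _ => hfs _⟩)

variable [Finite ι]

lemma frontier_Iic_subset_iUnion (z : ι → ℝ) : frontier (Iic z) ⊆ ⋃ i, {x | x i = z i} := by
  intro x hx
  have hxz : x ≤ z := isClosed_Iic.frontier_subset hx
  by_contra hne
  simp only [mem_iUnion, mem_ofPred_eq, not_exists] at hne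
  have hopen : IsOpen {w : ι → ℝ | ∀ i, w i < z i} := by
    simpa only [ofPred_forall] using
      isOpen_iInter_of_finite fun i => isOpen_lt (continuous_apply i) continuous_const
  exact hx.2 <| interior_maximal (fun w hw i => (hw i).le) hopen fun i => (hxz i).lt_of_ne (hne i)

lemma measure_frontier_Iic_eq_zero (μ : Measure (ι → ℝ)) {z : ι → ℝ}
    (h : ∀ i, μ {x | x i = z i} = 0) : μ (frontier (Iic z)) = 0 :=
  measure_mono_null (frontier_Iic_subset_iUnion z) (measure_iUnion_null h)

/-- Only countably many diagonal shifts of `y` put mass on a coordinate hyperplane. -/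
lemma frequently_measure_frontier_Iic_add_const_eq_zero (μ : Measure (ι → ℝ))
    [IsFiniteMeasure μ] (y : ι → ℝ) :
    ∃ᶠ δ in 𝓝[>] (0 : ℝ), μ (frontier (Iic (y + const ι δ))) = 0 := by
  set C := ⋃ i, {δ : ℝ | 0 < μ {x | x i - y i = δ}}
  have hC : C.Countable :=
    countable_iUnion fun i => Measure.countable_meas_level_set_pos (by fun_prop)
  have h0 : (0 : ℝ) ∈ closure (Ioi 0 ∩ Cᶜ) := by
    refine closure_minimal ((hC.dense_compl ℝ).open_subset_closure_inter isOpen_Ioi)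
      isClosed_closure ?_
    simp
  rw [mem_closure_iff_frequently] at h0
  refine (frequently_nhdsWithin_iff.2 (h0.mono fun δ hδ => ⟨hδ.2, hδ.1⟩)).mono fun δ hδ => ?_
  refine measure_frontier_Iic_eq_zero μ fun i => ?_
  have hi : ¬ 0 < μ {x | x i - y i = δ} := fun h => hδ (mem_iUnion.2 ⟨i, h⟩)
  simpa [sub_eq_iff_eq_add'] using hi

lemma diagRightContinuous_measureReal_Iic (μ : Measure (ι → ℝ)) [IsFiniteMeasure μ] :
    DiagRightContinuous fun y => μ.real (Iic y) := by
  intro y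
  have hinter : ⋂ δ > (0 : ℝ), Iic (y + const ι δ) = Iic y := by
    ext x
    simp only [mem_iInter, mem_Iic, Pi.le_def, Pi.add_apply, const_apply]
    exact ⟨fun h i => le_of_forall_pos_le_add fun δ hδ => h δ hδ i,
      fun h δ hδ i => by linarith [h i]⟩
  have hmono : ∀ δ δ' : ℝ, 0 < δ → δ ≤ δ' → Iic (y + const ι δ) ⊆ Iic (y + const ι δ') :=
    fun δ δ' _ h => Iic_subset_Iic.2 fun i => by simpa using h
  have := tendsto_measure_biInter_gt (μ := μ) (fun _ _ => measurableSet_Iic.nullMeasurableSet)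
    hmono ⟨1, one_pos, measure_ne_top μ _⟩
  rw [hinter] at this
  exact (ENNReal.tendsto_toReal (measure_ne_top μ _)).comp this

lemma DiagRightContinuous.eq_of_forall_null_frontier {f g : (ι → ℝ) → ℝ}
    (hf : DiagRightContinuous f) (hg : DiagRightContinuous g) (μ : Measure (ι → ℝ))
    [IsFiniteMeasure μ] (h : ∀ z, μ (frontier (Iic z)) = 0 → f z = g z) : f = g :=
  funext fun y => tendsto_nhds_unique_of_frequently_eq (hf y) (hg y)
    ((frequently_measure_frontier_Iic_add_const_eq_zero μ y).mono fun _ hδ => h _ hδ)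

end Orthant

section Tightness

variable {ι : Type*}

lemma tendsto_measure_Iic_update [Finite ι] [DecidableEq ι] (μ : Measure (ι → ℝ)) (i : ι) (c : ℝ) :
    Tendsto (fun T : ℝ => μ (Iic (update (const ι T) i c))) atTop (𝓝 (μ {x | x i ≤ c})) := by
  have hmono : Monotone fun T : ℝ => Iic (update (const ι T) i c) := fun S T hST =>
    Iic_subset_Iic.2 fun j => by rcases eq_or_ne j i with rfl | hj <;> simp [*]
  have hunion : ⋃ T : ℝ, Iic (update (const ι T) i c) = {x | x i ≤ c} := by
    ext x
    simp only [mem_iUnion, mem_Iic, mem_ofPred_eq]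
    refine ⟨fun ⟨T, hT⟩ => by simpa using hT i, fun hx => ?_⟩
    obtain ⟨T, hT⟩ := (finite_range x).bddAbove
    refine ⟨T, fun j => ?_⟩
    rcases eq_or_ne j i with rfl | hj
    · simpa using hx
    · simpa [hj] using hT (mem_range_self j)
  rw [← hunion]
  exact tendsto_measure_iUnion_atTop hmono

lemma measureReal_halfspace_eq_of_Iic [Finite ι] {μ ρ : Measure (ι → ℝ)} [IsFiniteMeasure μ]
    [IsFiniteMeasure ρ] {g : ℝ → ℝ} (hg : Continuous g)
    (h : ∀ y, ρ.real (Iic y) = g (μ.real (Iic y))) (i : ι) (c : ℝ) :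
    ρ.real {x | x i ≤ c} = g (μ.real {x | x i ≤ c}) := by
  classical
  have hμ := (hg.tendsto _).comp
    ((ENNReal.tendsto_toReal (measure_ne_top μ _)).comp (tendsto_measure_Iic_update μ i c))
  have hρ := (ENNReal.tendsto_toReal (measure_ne_top ρ _)).comp (tendsto_measure_Iic_update ρ i c)
  exact tendsto_nhds_unique hρ (hμ.congr fun T => (h _).symm)

variable [Fintype ι]

lemma measureReal_compl_Icc_le_of_Iic_rpow {μ ρ : Measure (ι → ℝ)} [IsProbabilityMeasure μ]
    [IsProbabilityMeasure ρ] {p : ℝ} (hp₀ : 0 ≤ p) (hp₁ : p ≤ 1)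
    (h : ∀ y, ρ.real (Iic y) = μ.real (Iic y) ^ p) (a b : ι → ℝ) :
    ρ.real (Icc a b)ᶜ ≤ μ.real (Iic b)ᶜ + ∑ i, μ.real {x | x i ≤ a i} ^ p := by
  have hsub : (Icc a b)ᶜ ⊆ (Iic b)ᶜ ∪ ⋃ i, {x | x i ≤ a i} := by
    intro x hx
    by_cases hxb : x ≤ b
    · have hax : ¬ a ≤ x := fun hax => hx ⟨hax, hxb⟩
      simp only [Pi.le_def, not_forall, not_le] at hax
      obtain ⟨i, hi⟩ := hax
      exact Or.inr (mem_iUnion.2 ⟨i, hi.le⟩)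
    · exact Or.inl hxb
  have hupper : ρ.real (Iic b)ᶜ ≤ μ.real (Iic b)ᶜ := by
    simp only [measureReal_compl measurableSet_Iic, probReal_univ, h b]
    exact sub_le_sub_left (Real.self_le_rpow_of_le_one measureReal_nonneg measureReal_le_one hp₁) 1
  calc ρ.real (Icc a b)ᶜ ≤ ρ.real ((Iic b)ᶜ ∪ ⋃ i, {x | x i ≤ a i}) := measureReal_mono hsub
    _ ≤ ρ.real (Iic b)ᶜ + ∑ i, ρ.real {x | x i ≤ a i} :=
      (measureReal_union_le _ _).trans (add_le_add le_rfl (measureReal_iUnion_fintype_le _))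
    _ = ρ.real (Iic b)ᶜ + ∑ i, μ.real {x | x i ≤ a i} ^ p := by
      simp only [measureReal_halfspace_eq_of_Iic (Real.continuous_rpow_const hp₀) h]
    _ ≤ _ := by gcongr

lemma isTightMeasureSet_range_of_Iic_rpow {α : Type*} {μ ρ : α → ProbabilityMeasure (ι → ℝ)}
    {p : ℝ} (hp₀ : 0 < p) (hp₁ : p ≤ 1)
    (h : ∀ n y, (ρ n : Measure (ι → ℝ)).real (Iic y) = (μ n : Measure (ι → ℝ)).real (Iic y) ^ p)
    (hμ : IsTightMeasureSet {(ν : Measure (ι → ℝ)) | ν ∈ range μ}) :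
    IsTightMeasureSet {(ν : Measure (ι → ℝ)) | ν ∈ range ρ} := by
  rw [isTightMeasureSet_iff_exists_isCompact_measure_compl_le] at hμ ⊢
  intro ε hε
  rcases eq_or_ne ε ⊤ with rfl | hε_top
  · exact ⟨∅, isCompact_empty, fun _ _ => le_top⟩
  have hcont : Continuous fun η : ℝ => η + Fintype.card ι * η ^ p :=
    continuous_id.add (continuous_const.mul (Real.continuous_rpow_const hp₀.le))
  have hbound : Tendsto (fun η : ℝ => η + Fintype.card ι * η ^ p) (𝓝 0) (𝓝 0) := by
    simpa [Real.zero_rpow hp₀.ne'] using hcont.tendsto 0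
  obtain ⟨η, hηε, hη⟩ :=
    ((hbound.eventually (gt_mem_nhds (ENNReal.toReal_pos hε.ne' hε_top))).filter_mono
      nhdsWithin_le_nhds |>.and (self_mem_nhdsWithin (s := Ioi 0))).exists
  obtain ⟨K, hK, hKμ⟩ := hμ (ENNReal.ofReal η) (by simpa using hη)
  have hKη : ∀ n, ∀ s ⊆ Kᶜ, (μ n : Measure (ι → ℝ)).real s ≤ η := fun n s hs =>
    ENNReal.toReal_le_of_le_ofReal hη.le
      ((measure_mono hs).trans (hKμ _ ⟨μ n, mem_range_self n, rfl⟩))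
  have hKIcc := hK.isBounded.subset_Icc_sInf_sSup
  -- lowered by `1` so that the closed halfspaces `{x | x i ≤ a i}` miss `K`
  refine ⟨Icc (sInf K - 1) (sSup K), isCompact_Icc, ?_⟩
  rintro _ ⟨_, ⟨n, rfl⟩, rfl⟩
  have hupper : (μ n : Measure (ι → ℝ)).real (Iic (sSup K))ᶜ ≤ η :=
    hKη n _ (compl_subset_compl.2 fun x hx => (hKIcc hx).2)
  have hlower : ∀ i, (μ n : Measure (ι → ℝ)).real {x | x i ≤ (sInf K - 1) i} ^ p ≤ η ^ p := by
    refine fun i => Real.rpow_le_rpow measureReal_nonneg (hKη n _ fun x hx hxK => ?_) hp₀.le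
    have := (hKIcc hxK).1 i
    simp only [mem_ofPred_eq, Pi.sub_apply, Pi.one_apply] at hx
    linarith
  rw [← ofReal_measureReal, ← ENNReal.ofReal_toReal hε_top]
  refine ENNReal.ofReal_le_ofReal ?_
  calc _ ≤ _ := measureReal_compl_Icc_le_of_Iic_rpow hp₀.le hp₁ (h n) _ _
    _ ≤ η + ∑ _i : ι, η ^ p := add_le_add hupper (Finset.sum_le_sum fun i _ => hlower i)
    _ ≤ ε.toReal := by simpa using hηε.le

end Tightness

lemma ProbabilityMeasure.tendsto_measureReal_of_null_frontier {Ω α : Type*} [MeasurableSpace Ω]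
    [TopologicalSpace Ω] [OpensMeasurableSpace Ω] [HasOuterApproxClosed Ω] {L : Filter α}
    {μs : α → ProbabilityMeasure Ω} {μ : ProbabilityMeasure Ω} (h : Tendsto μs L (𝓝 μ))
    {E : Set Ω} (hE : (μ : Measure Ω) (frontier E) = 0) :
    Tendsto (fun i => (μs i : Measure Ω).real E) L (𝓝 ((μ : Measure Ω).real E)) :=
  (ENNReal.tendsto_toReal (measure_ne_top _ E)).comp
    (ProbabilityMeasure.tendsto_measure_of_null_frontier_of_tendsto' h hE)

lemma isTightMeasureSet_range_of_tendsto {X : Type*} [PseudoMetricSpace X] [MeasurableSpace X]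
    [OpensMeasurableSpace X] [SecondCountableTopology X] [CompleteSpace X]
    {μs : ℕ → ProbabilityMeasure X} {μ : ProbabilityMeasure X} (h : Tendsto μs atTop (𝓝 μ)) :
    IsTightMeasureSet {(ν : Measure X) | ν ∈ range μs} :=
  isTightMeasureSet_of_isCompact_closure
    (h.isCompact_insert_range.closure_of_subset (subset_insert _ _))

lemma exists_measureReal_Iic_eq_of_tendsto {ι : Type*} [Fintype ι]
    {ρ : ℕ → ProbabilityMeasure (ι → ℝ)}
    (hρ : IsTightMeasureSet {(ν : Measure (ι → ℝ)) | ν ∈ range ρ}) {H : (ι → ℝ) → ℝ}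
    (hH : DiagRightContinuous H) (μ : Measure (ι → ℝ)) [IsFiniteMeasure μ]
    (hlim : ∀ z, μ (frontier (Iic z)) = 0 →
      Tendsto (fun n => (ρ n : Measure (ι → ℝ)).real (Iic z)) atTop (𝓝 (H z))) :
    ∃ ν : ProbabilityMeasure (ι → ℝ), ∀ z, (ν : Measure (ι → ℝ)).real (Iic z) = H z := by
  obtain ⟨ν, -, hν⟩ := (isCompact_closure_of_isTightMeasureSet hρ).exists_mapClusterPt
    (f := atTop) (u := ρ)
    (le_principal_iff.2 (mem_map.2 (univ_mem' fun n => subset_closure (mem_range_self n))))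
  refine ⟨ν, congrFun ((diagRightContinuous_measureReal_Iic _).eq_of_forall_null_frontier hH
    (μ + ν) fun z hz => ?_)⟩
  rw [Measure.add_apply, add_eq_zero] at hz
  have hνz := hν.tendsto_comp
    (ProbabilityMeasure.tendsto_measureReal_of_null_frontier tendsto_id hz.2)
  exact eq_of_nhds_neBot (ClusterPt.mono hνz (hlim z hz.1)).neBot

noncomputable def phiNegLog (φ : ℝ → ℝ) (t : ℝ) : ℝ := if 0 < t then φ (-Real.log t) else 0

lemma phiRel_iff {φ : ℝ → ℝ} {d : ℕ} {F G : (Fin d → ℝ) → ℝ} (hG : ∀ y, 0 ≤ G y) :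
    PhiRel φ F G ↔ ∀ y, F y = phiNegLog φ (G y) := by
  refine forall_congr' fun y => ?_
  rcases (hG y).eq_or_lt with h | h
  · simp [phiNegLog, ← h]
  · simp [phiNegLog, h, h.ne']

lemma IsLaplaceOfPos.continuousOn_phiNegLog {φ : ℝ → ℝ} (hφ : IsLaplaceOfPos φ) :
    ContinuousOn (phiNegLog φ) (Icc 0 1) := by
  obtain ⟨μ, hμ, hpos, hφμ⟩ := hφ
  have heq : EqOn (phiNegLog φ) (fun t => ∫ x, t ^ x ∂μ) (Icc 0 1) := by
    intro t ht
    rcases ht.1.eq_or_lt with rfl | h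
    · -- `μ` has no atom at `0`, so `∫ 0 ^ x dμ = 0 = φ ∞`.
      simp only [phiNegLog, lt_irrefl, if_false]
      exact (integral_eq_zero_of_ae (hpos.mono fun x hx => Real.zero_rpow hx.ne')).symm
    · rw [phiNegLog, if_pos h, hφμ _ (neg_nonneg.2 (Real.log_nonpos ht.1 ht.2))]
      simp [Real.rpow_def_of_pos h]
  refine ContinuousOn.congr ?_ heq
  refine continuousOn_of_dominated (bound := fun _ => 1) (fun t _ => by fun_prop)
    (fun t ht => hpos.mono fun x hx => ?_) (integrable_const 1)
    (hpos.mono fun x hx => (Real.continuous_rpow_const hx.le).continuousOn)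
  rw [Real.norm_of_nonneg (Real.rpow_nonneg ht.1 x)]
  exact Real.rpow_le_one ht.1 ht.2 hx.le

section DistributionFunction

variable {d : ℕ}

lemma DFof_mem_Icc (ν : ProbabilityMeasure (Fin d → ℝ)) (y : Fin d → ℝ) : DFof ν y ∈ Icc 0 1 :=
  ⟨measureReal_nonneg, measureReal_le_one⟩

lemma diagRightContinuous_DFof (ν : ProbabilityMeasure (Fin d → ℝ)) :
    DiagRightContinuous (DFof ν) :=
  diagRightContinuous_measureReal_Iic _

lemma tendsto_DFof {α : Type*} {L : Filter α} {νs : α → ProbabilityMeasure (Fin d → ℝ)}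
    {ν : ProbabilityMeasure (Fin d → ℝ)} (h : Tendsto νs L (𝓝 ν)) {y : Fin d → ℝ}
    (hy : (ν : Measure (Fin d → ℝ)) (frontier (Iic y)) = 0) :
    Tendsto (fun n => DFof (νs n) y) L (𝓝 (DFof ν y)) :=
  ProbabilityMeasure.tendsto_measureReal_of_null_frontier h hy

lemma isMID_of_tendsto {νs : ℕ → ProbabilityMeasure (Fin d → ℝ)}
    {ν : ProbabilityMeasure (Fin d → ℝ)} (hmid : ∀ n, IsMID (DFof (νs n)))
    (h : Tendsto νs atTop (𝓝 ν)) : IsMID (DFof ν) := by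
  refine ⟨⟨ν, inferInstance, fun _ => rfl⟩, fun k hk => ?_⟩
  have hp : (0 : ℝ) < (k : ℝ)⁻¹ := by positivity
  have hrpow := Real.continuous_rpow_const hp.le
  choose ρ hρ hρν using fun n => (hmid n).2 k hk
  let ρ' n : ProbabilityMeasure (Fin d → ℝ) := ⟨ρ n, hρ n⟩
  have htight : IsTightMeasureSet {(μ : Measure (Fin d → ℝ)) | μ ∈ range ρ'} :=
    isTightMeasureSet_range_of_Iic_rpow hp (inv_le_one_of_one_le₀ (by exact_mod_cast hk))
      (fun n y => (hρν n y).symm) (isTightMeasureSet_range_of_tendsto h)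
  obtain ⟨μ, hμ⟩ := exists_measureReal_Iic_eq_of_tendsto htight
    ((diagRightContinuous_DFof ν).comp hrpow.continuousOn fun _ => mem_univ _) ν
    fun z hz => ((hrpow.tendsto _).comp (tendsto_DFof h hz)).congr fun n => hρν n z
  exact ⟨μ, inferInstance, fun y => (hμ y).symm⟩

lemma phiRel_of_tendsto {φ : ℝ → ℝ} (hφ : IsLaplaceOfPos φ)
    {νF νG : ℕ → ProbabilityMeasure (Fin d → ℝ)} {νF' νG' : ProbabilityMeasure (Fin d → ℝ)}
    (hrel : ∀ n, PhiRel φ (DFof (νF n)) (DFof (νG n))) (hF : Tendsto νF atTop (𝓝 νF'))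
    (hG : Tendsto νG atTop (𝓝 νG')) : PhiRel φ (DFof νF') (DFof νG') := by
  simp_rw [phiRel_iff fun y => (DFof_mem_Icc _ y).1] at hrel ⊢
  have hψ := hφ.continuousOn_phiNegLog
  refine congrFun ((diagRightContinuous_DFof νF').eq_of_forall_null_frontier
    ((diagRightContinuous_DFof νG').comp hψ (DFof_mem_Icc νG'))
    ((νF' : Measure (Fin d → ℝ)) + νG') fun z hz => ?_)
  rw [Measure.add_apply, add_eq_zero] at hz
  have hψG : Tendsto (fun n => phiNegLog φ (DFof (νG n) z)) atTop
      (𝓝 (phiNegLog φ (DFof νG' z))) :=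
    (hψ _ (DFof_mem_Icc _ z)).tendsto.comp (tendsto_nhdsWithin_iff.2
      ⟨tendsto_DFof hG hz.2, Eventually.of_forall fun n => DFof_mem_Icc _ z⟩)
  exact tendsto_nhds_unique (tendsto_DFof hF hz.1) (hψG.congr fun n => (hrel n z).symm)

end DistributionFunction

theorem phiMID_closed_under_weak_limits_general (d : ℕ)
    (φ : ℝ → ℝ) (hφ : IsLaplaceOfPos φ)
    (νF νG : ℕ → ProbabilityMeasure (Fin d → ℝ))
    (νFlim νGlim : ProbabilityMeasure (Fin d → ℝ))
    (hGmid : ∀ n, IsMID (DFof (νG n)))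
    (hrel : ∀ n, PhiRel φ (DFof (νF n)) (DFof (νG n)))
    (hFconv : Tendsto νF atTop (𝓝 νFlim))
    (hGconv : Tendsto νG atTop (𝓝 νGlim)) :
    IsMID (DFof νGlim) ∧ PhiRel φ (DFof νFlim) (DFof νGlim) :=
  ⟨isMID_of_tendsto hGmid hGconv, phiRel_of_tendsto hφ hrel hFconv hGconv⟩

/-- Theorem 3.3: if `F_n = φ(-log G_n)` are φ-MID distribution functions on
`ℝ^d` (`G_n` MID), `F_n → F` weakly and `G_n → G` weakly with `F`, `G` proper distribution
functions, then `G` is MID and `F = φ(-log G)`: the weak limit of φ-MID laws is φ-MID. -/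
theorem phiMID_closed_under_weak_limits (d : ℕ) (hd : 2 ≤ d)
    (φ : ℝ → ℝ) (hφ : IsLaplaceOfPos φ)
    (νF νG : ℕ → ProbabilityMeasure (Fin d → ℝ))
    (νFlim νGlim : ProbabilityMeasure (Fin d → ℝ))
    (hGmid : ∀ n, IsMID (DFof (νG n)))
    (hrel : ∀ n, PhiRel φ (DFof (νF n)) (DFof (νG n)))
    (hFconv : Tendsto νF atTop (𝓝 νFlim))
    (hGconv : Tendsto νG atTop (𝓝 νGlim)) :
    IsMID (DFof νGlim) ∧ PhiRel φ (DFof νFlim) (DFof νGlim) :=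
  phiMID_closed_under_weak_limits_general d φ hφ νF νG νFlim νGlim hGmid hrel hFconv hGconv
end

section
/- Conversely, suppose H_θ(y)^j φ((1 - H_θ(y)^k)/θ) → F(y) as θ ↓ 0 along a sequence, where F = φ(-k log G) for a MID distribution function G with G(y) > 0, and φ is strictly decreasing. Then (1 - H_θ(y))/θ → -log G(y) = μ([λ,y]^c) pointwise for y with G(y) > 0. -/
open MeasureTheory Filter Topology

open scoped ENNReal

lemma df_bounds {d : ℕ} {F : (Fin d → ℝ) → ℝ} (hF : IsDF F) (y : Fin d → ℝ) :
    0 ≤ F y ∧ F y ≤ 1 := by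
  obtain ⟨ν, hν, heq⟩ := hF
  rw [heq]
  refine ⟨ENNReal.toReal_nonneg, ?_⟩
  have h1 : ν {x | x ≤ y} ≤ 1 := prob_le_one
  calc (ν {x | x ≤ y}).toReal ≤ (1 : ℝ≥0∞).toReal := ENNReal.toReal_mono ENNReal.one_ne_top h1
    _ = 1 := by simp

lemma phi_nonneg {φ : ℝ → ℝ} (hφ : IsLaplaceOfPos φ) {v : ℝ} (hv : 0 ≤ v) : 0 ≤ φ v := by
  obtain ⟨μ, hμ, hpos, heq⟩ := hφ
  rw [heq v hv]
  exact integral_nonneg fun x => (Real.exp_pos _).le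

lemma phi_tendsto_zero {φ : ℝ → ℝ} (hφ : IsLaplaceOfPos φ) (w : ℕ → ℝ)
    (hw0 : ∀ n, 0 ≤ w n) (hw : Tendsto w atTop atTop) :
    Tendsto (fun n => φ (w n)) atTop (𝓝 0) := by
  obtain ⟨μ, hμ, hpos, heq⟩ := hφ
  have h : Tendsto (fun n => ∫ x, Real.exp (-(w n) * x) ∂μ) atTop (𝓝 (∫ _x, (0:ℝ) ∂μ)) := by
    apply tendsto_integral_of_dominated_convergence (fun _ => (1:ℝ))
    · intro n
      exact (Real.continuous_exp.comp (continuous_const.mul continuous_id)).aestronglyMeasurable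
    · exact integrable_const 1
    · intro n
      filter_upwards [hpos] with x hx
      rw [Real.norm_eq_abs, abs_of_pos (Real.exp_pos _)]
      exact Real.exp_le_one_iff.2 (by nlinarith [hw0 n])
    · filter_upwards [hpos] with x hx
      have h1 : Tendsto (fun n => w n * x) atTop atTop := hw.atTop_mul_const hx
      have h2 : Tendsto (fun n => -(w n * x)) atTop atBot := tendsto_neg_atTop_atBot.comp h1
      simp only [neg_mul]
      exact Real.tendsto_exp_atBot.comp h2
  simpa using h.congr fun n => (heq (w n) (hw0 n)).symm

/-- necessity in Theorem 3.7: if, along a sequence `θ_n ↓ 0`,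
`H_θ(y)^j φ((1 - H_θ(y)^k)/θ) → F(y) = φ(-k log G(y))` pointwise for every `y` with
`G(y) > 0`, where `G` is a MID distribution function and `φ` is strictly decreasing, then
`(1 - H_θ(y))/θ → -log G(y) = μ([λ,y]ᶜ)` for every such `y`. -/
theorem phiMID_necessity (d : ℕ) (hd : 2 ≤ d)
    (φ : ℝ → ℝ) (hφ : IsLaplaceOfPos φ) (hanti : StrictAntiOn φ (Set.Ici (0 : ℝ)))
    (j k : ℕ) (hk : 1 ≤ k)
    (H : ℝ → (Fin d → ℝ) → ℝ) (hH : ∀ θ : ℝ, 0 < θ → IsDF (H θ))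
    (θ : ℕ → ℝ) (hθpos : ∀ n, 0 < θ n) (hθ0 : Tendsto θ atTop (𝓝 0))
    (G : (Fin d → ℝ) → ℝ) (hG : IsMID G)
    (hconv : ∀ y : Fin d → ℝ, 0 < G y →
      Tendsto (fun n => H (θ n) y ^ j * φ ((1 - H (θ n) y ^ k) / θ n)) atTop
        (𝓝 (φ (-(k : ℝ) * Real.log (G y))))) :
    ∀ y : Fin d → ℝ, 0 < G y →
      Tendsto (fun n => (1 - H (θ n) y) / θ n) atTop (𝓝 (-Real.log (G y))) := by
  intro y hGy
  set c : ℝ := -(k : ℝ) * Real.log (G y) with hc_def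
  set h : ℕ → ℝ := fun n => H (θ n) y with hh_def
  set v : ℕ → ℝ := fun n => (1 - h n ^ k) / θ n with hv_def
  have hGy1 : G y ≤ 1 := (df_bounds hG.1 y).2
  have hc : 0 ≤ c := by
    have := Real.log_nonpos hGy.le hGy1
    have hk0 : (0:ℝ) ≤ (k:ℝ) := Nat.cast_nonneg k
    nlinarith
  -- φ is antitone on [0, ∞)
  have hanti' : ∀ a b : ℝ, 0 ≤ a → a ≤ b → φ b ≤ φ a := by
    intro a b ha hab
    rcases eq_or_lt_of_le hab with rfl | hlt
    · exact le_rfl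
    · exact (hanti (Set.mem_Ici.2 ha) (Set.mem_Ici.2 (ha.trans hab)) hlt).le
  have hL : 0 < φ c := by
    have h1 : φ (c + 1) < φ c :=
      hanti (Set.mem_Ici.2 hc) (Set.mem_Ici.2 (by linarith)) (by linarith)
    have h2 : 0 ≤ φ (c + 1) := phi_nonneg hφ (by linarith)
    linarith
  have hh01 : ∀ n, 0 ≤ h n ∧ h n ≤ 1 := fun n => df_bounds (hH (θ n) (hθpos n)) y
  have hv0 : ∀ n, 0 ≤ v n := by
    intro n
    have := (hh01 n).1
    have := (hh01 n).2
    have hpk : h n ^ k ≤ 1 := pow_le_one₀ (hh01 n).1 (hh01 n).2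
    exact div_nonneg (by linarith) (hθpos n).le
  have hφvle : ∀ n, h n ^ j * φ (v n) ≤ φ (v n) := by
    intro n
    exact mul_le_of_le_one_left (phi_nonneg hφ (hv0 n)) (pow_le_one₀ (hh01 n).1 (hh01 n).2)
  have hprod := hconv y hGy
  -- Step A: h n → 1
  have hh1 : Tendsto h atTop (𝓝 1) := by
    refine tendsto_order.2 ⟨?_, ?_⟩
    · intro a ha
      rcases lt_or_ge a 0 with ha0 | ha0
      · exact Eventually.of_forall fun n => lt_of_lt_of_le ha0 (hh01 n).1
      · by_contra hcon
        rw [not_eventually] at hcon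
        set ε : ℝ := 1 - a ^ k with hε_def
        have hak : a ^ k < 1 := pow_lt_one₀ ha0 ha (by omega)
        have hε : 0 < ε := by simp [hε_def]; linarith
        have hwtop : Tendsto (fun n => ε / θ n) atTop atTop := by
          have hi : Tendsto (fun n => (θ n)⁻¹) atTop atTop :=
            tendsto_inv_nhdsGT_zero.comp
              (tendsto_nhdsWithin_iff.2 ⟨hθ0, Eventually.of_forall fun n => hθpos n⟩)
          simpa [div_eq_mul_inv] using hi.const_mul_atTop hε
        have hw0 : ∀ n, 0 ≤ ε / θ n := fun n => div_nonneg hε.le (hθpos n).le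
        have hφw : Tendsto (fun n => φ (ε / θ n)) atTop (𝓝 0) :=
          phi_tendsto_zero hφ _ hw0 hwtop
        have hev1 : ∀ᶠ n in atTop, φ c / 2 < h n ^ j * φ (v n) :=
          hprod.eventually (eventually_gt_nhds (by linarith))
        have hev2 : ∀ᶠ n in atTop, φ (ε / θ n) < φ c / 2 :=
          hφw.eventually (eventually_lt_nhds (by linarith))
        obtain ⟨n, hna, hn1, hn2⟩ := (hcon.and_eventually (hev1.and hev2)).exists
        rw [not_lt] at hna
        -- h n ≤ a, so v n ≥ ε / θ n
        have hvn : ε / θ n ≤ v n := by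
          have hpk : h n ^ k ≤ a ^ k := pow_le_pow_left₀ (hh01 n).1 hna k
          have hnum : ε ≤ 1 - h n ^ k := by rw [hε_def]; linarith
          exact (div_le_div_iff_of_pos_right (hθpos n)).2 hnum
        have hcontra : h n ^ j * φ (v n) ≤ φ (ε / θ n) :=
          le_trans (hφvle n) (hanti' _ _ (hw0 n) hvn)
        have hn1' : φ c / 2 < h n ^ j * φ (v n) := hn1
        linarith
    · intro b hb
      exact Eventually.of_forall fun n => lt_of_le_of_lt (hh01 n).2 hb
  -- Step B: φ (v n) → φ c
  have hj1 : Tendsto (fun n => h n ^ j) atTop (𝓝 1) := by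
    simpa using hh1.pow j
  have hφv : Tendsto (fun n => φ (v n)) atTop (𝓝 (φ c)) := by
    have hdiv : Tendsto (fun n => (h n ^ j * φ (v n)) / h n ^ j) atTop (𝓝 (φ c / 1)) :=
      hprod.div hj1 one_ne_zero
    rw [div_one] at hdiv
    have hne : ∀ᶠ n in atTop, h n ^ j ≠ 0 :=
      (hj1.eventually (eventually_gt_nhds (by norm_num : (0:ℝ) < 1))).mono
        fun n hn => ne_of_gt hn
    refine hdiv.congr' (hne.mono fun n hn => ?_)
    exact mul_div_cancel_left₀ _ hn
  -- Step C: v n → c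
  have hv : Tendsto v atTop (𝓝 c) := by
    refine tendsto_order.2 ⟨?_, ?_⟩
    · intro a ha
      rcases lt_or_ge a 0 with ha0 | ha0
      · exact Eventually.of_forall fun n => lt_of_lt_of_le ha0 (hv0 n)
      · have hφa : φ c < φ a := hanti (Set.mem_Ici.2 ha0) (Set.mem_Ici.2 hc) ha
        refine (hφv.eventually (eventually_lt_nhds hφa)).mono fun n hn => ?_
        by_contra hcon
        push_neg at hcon
        exact absurd (hanti' (v n) a (hv0 n) hcon) (not_le.2 hn)
    · intro b hb
      have hφb : φ b < φ c := hanti (Set.mem_Ici.2 hc) (Set.mem_Ici.2 (hc.trans hb.le)) hb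
      refine (hφv.eventually (eventually_gt_nhds hφb)).mono fun n hn => ?_
      by_contra hcon
      push_neg at hcon
      exact absurd (hanti' b (v n) (hc.trans hb.le) hcon) (not_le.2 hn)
  -- Step D
  have hS : Tendsto (fun n => ∑ i ∈ Finset.range k, h n ^ i) atTop (𝓝 (k : ℝ)) := by
    have : Tendsto (fun n => ∑ i ∈ Finset.range k, h n ^ i) atTop
        (𝓝 (∑ i ∈ Finset.range k, (1:ℝ) ^ i)) :=
      tendsto_finset_sum _ fun i _ => by simpa using hh1.pow i
    simpa using this
  have hSpos : ∀ᶠ n in atTop, (0:ℝ) < ∑ i ∈ Finset.range k, h n ^ i := by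
    refine hS.eventually (eventually_gt_nhds ?_)
    exact_mod_cast Nat.cast_pos.2 (by omega : 0 < k)
  have hk0 : (k : ℝ) ≠ 0 := Nat.cast_ne_zero.2 (by omega)
  have hfin : Tendsto (fun n => v n / ∑ i ∈ Finset.range k, h n ^ i) atTop
      (𝓝 (c / k)) := hv.div hS hk0
  have hck : c / k = -Real.log (G y) := by
    rw [hc_def]; field_simp
  rw [← hck]
  refine hfin.congr' (hSpos.mono fun n hSn => ?_)
  have hid : 1 - h n ^ k = (1 - h n) * ∑ i ∈ Finset.range k, h n ^ i := by
    have := geom_sum_mul (h n) k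
    nlinarith [this]
  show v n / _ = (1 - H (θ n) y) / θ n
  rw [hv_def]
  simp only
  rw [hid]
  have h1 : θ n ≠ 0 := (hθpos n).ne'
  have h2 : (∑ i ∈ Finset.range k, h n ^ i) ≠ 0 := hSn.ne'
  field_simp
  ring
end
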